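/- Let F be a field, V = F^{n+1}, let x ⊆ V be a subspace with dim x ≥ δ+1, and let δ ≤ k ≤ n. Let W ⊆ ⋀^{k+1} V be the subspace spanned by all vectors of the form u_0 ∧ ⋯ ∧ u_δ ∧ w_{δ+1} ∧ ⋯ ∧ w_k with u_0,…,u_δ ∈ x and w_{δ+1},…,w_k ∈ V. Then for linearly independent vectors v_0,…,v_k ∈ V, the totally decomposable vector v_0 ∧ ⋯ ∧ v_k lies in W if and only if dim(span{v_0,…,v_k} ∩ x) ≥ δ+1. Consequently, the nonzero totally decomposable vectors of W are exactly the Plücker vectors of the (k+1)-dimensional subspaces of V meeting x in a subspace of dimension at least δ+1, i.e., ℙ(W) ∩ 𝒱 is the Schubert variety Ω(F(x,δ,k)), where 𝒱 is the Plücker embedding of G_F(k+1,n+1). -/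

import Mathlib

/-!
Let `U` be the span of `v`. If `dim (U ⊓ x) ≥ δ + 1`, extend `δ + 1` independent vectors of
`U ⊓ x` to a basis of `U`: its wedge is a generator of `W`, and the wedge of `v` is a multiple
of it. If `dim (U ⊓ x) ≤ δ`, take a projection `p` of `V` onto `U` whose kernel contains a
complement of `U ⊓ x` in `x`, so that `p x` has dimension `≤ δ`. The form
`(w_i) ↦ det (p w_i)` then kills every generator of `W`, whose first `δ + 1` factors become
dependent under `p`, but not the wedge of `v`.
-/

open ExteriorAlgebra Module Submodule Set

theorem Submodule.exists_retraction_finrank_map_le {K V : Type*} [DivisionRing K]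
    [AddCommGroup V] [Module K V] (U x : Submodule K V) [FiniteDimensional K ↥(U ⊓ x)] :
    ∃ p : V →ₗ[K] U, (∀ u : U, p u = u) ∧ finrank K (x.map p) ≤ finrank K ↥(U ⊓ x) := by
  obtain ⟨y, hdisj, hsup⟩ :=
    IsModularLattice.exists_disjoint_and_sup_eq (inf_le_right : U ⊓ x ≤ x)
  have hUy : Disjoint U y := by
    rw [disjoint_iff, ← inf_eq_right.2 (hsup ▸ le_sup_right : y ≤ x), ← inf_assoc]
    exact hdisj.eq_bot
  obtain ⟨C, hyC, hCU⟩ := hUy.symm.exists_isCompl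
  set p := U.projectionOnto C hCU.symm
  refine ⟨p, projectionOnto_apply_left hCU.symm, ?_⟩
  have hy : y.map p = ⊥ := by
    rwa [← LinearMap.le_ker_iff_map, ker_projectionOnto]
  have hx : x.map p = (U ⊓ x).map p := by
    conv_lhs => rw [← hsup]
    rw [Submodule.map_sup, hy, sup_bot_eq]
  exact hx ▸ Submodule.finrank_map_le _ _

theorem not_linearIndependent_of_finrank_lt {K M ι κ : Type*} [DivisionRing K]
    [AddCommGroup M] [Module K M] [Fintype κ] {w : ι → M} {e : κ → ι} (he : Function.Injective e)
    (s : Submodule K M) [FiniteDimensional K s] (hw : ∀ j, w (e j) ∈ s)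
    (hs : finrank K s < Fintype.card κ) :
    ¬ LinearIndependent K w := by
  intro hli
  have hli' : LinearIndependent K (fun j => (⟨w (e j), hw j⟩ : s)) :=
    LinearIndependent.of_comp s.subtype (hli.comp e he)
  exact hs.not_ge hli'.fintype_card_le_finrank

theorem LinearIndependent.exists_linearIndependent_fin_append {K V : Type*} [DivisionRing K]
    [AddCommGroup V] [Module K V] [FiniteDimensional K V] {a : ℕ} {u : Fin a → V}
    (hu : LinearIndependent K u) {b : ℕ} (hb : a + b ≤ finrank K V) :
    ∃ t : Fin b → V, LinearIndependent K (Fin.append u t) := by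
  induction b with
  | zero => exact ⟨Fin.elim0, by simpa using hu⟩
  | succ b ih =>
    obtain ⟨t, ht⟩ := ih (by omega)
    obtain ⟨z, hz⟩ : ∃ z, z ∉ span K (range (Fin.append u t)) := by
      by_contra! hall
      have htop : span K (range (Fin.append u t)) = ⊤ := eq_top_iff.2 fun z _ => hall z
      have := finrank_span_eq_card ht
      rw [htop, finrank_top, Fintype.card_fin] at this
      omega
    exact ⟨Fin.snoc t z, by rw [Fin.append_snoc]; exact linearIndependent_finSnoc.2 ⟨ht, hz⟩⟩

theorem AlternatingMap.map_eq_basis_det_smul {R M N ι : Type*} [CommRing R] [AddCommGroup M]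
    [Module R M] [AddCommGroup N] [Module R N] [Fintype ι] [DecidableEq ι]
    (e : Basis ι R M) (f : M [⋀^ι]→ₗ[R] N) (v : ι → M) :
    f v = e.det v • f e := by
  suffices key : f = e.det.smulRight (f e) from DFunLike.congr_fun key v
  refine e.ext_alternating fun σ hσ => ?_
  let π : Equiv.Perm ι := Equiv.ofBijective σ (Finite.injective_iff_bijective.1 hσ)
  change f (e ∘ π) = e.det (e ∘ π) • f e
  rcases Int.units_eq_one_or (Equiv.Perm.sign π) with hs | hs <;>
    simp [AlternatingMap.map_perm, Basis.det_self, hs]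

namespace ExteriorAlgebra

variable {R M : Type*} [CommRing R] [AddCommGroup M] [Module R M]

/-- The span `W` of the statement, for `a = δ + 1` and `b = k - δ`. -/
def schubertSpan (x : Submodule R M) (a b : ℕ) : Submodule R (ExteriorAlgebra R M) :=
  span R {w | ∃ (u : Fin a → M) (t : Fin b → M), (∀ i, u i ∈ x) ∧
    w = ιMulti R (a + b) (Fin.append u t)}

variable {F V : Type*} [Field F] [AddCommGroup V] [Module F V] {x : Submodule F V} {a b : ℕ}

theorem le_finrank_inf_of_ιMulti_mem_schubertSpan {v : Fin (a + b) → V}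
    (hv : LinearIndependent F v) (hmem : ιMulti F (a + b) v ∈ schubertSpan x a b) :
    a ≤ finrank F ↥(span F (range v) ⊓ x) := by
  set U := span F (range v)
  have : FiniteDimensional F U := .span_of_finite F (finite_range v)
  by_contra! hlt
  obtain ⟨p, hp, hpx⟩ := U.exists_retraction_finrank_map_le x
  have hpv : LinearIndependent F (p ∘ v) := by
    refine LinearIndependent.of_comp U.subtype ?_
    convert hv using 1
    funext i
    simp [hp ⟨v i, subset_span (mem_range_self i)⟩]
  let e := basisOfLinearIndependentOfCardEqFinrank' _ hpv
    (by rw [Fintype.card_fin, finrank_span_eq_card hv, Fintype.card_fin])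
  let A := e.det.compLinearMap p
  let Φ := liftAlternating (R := F) (M := V) (Function.update 0 (a + b) A)
  have hΦ : ∀ w, Φ (ιMulti F (a + b) w) = A w := fun w => by
    simp [Φ, liftAlternating_apply_ιMulti]
  have hker : schubertSpan x a b ≤ LinearMap.ker Φ := by
    refine span_le.2 ?_
    rintro _ ⟨u, t, hu, rfl⟩
    refine (hΦ _).trans (e.det.map_linearDependent _ ?_)
    refine not_linearIndependent_of_finrank_lt (Fin.castAdd_injective a b) (x.map p)
      (fun i => ?_) (by simpa using hpx.trans_lt hlt)
    simpa using mem_map_of_mem (f := p) (hu i)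
  have hAv : A v = 1 := by
    rw [← e.det_self]
    exact congrArg e.det (coe_basisOfLinearIndependentOfCardEqFinrank' ..).symm
  exact one_ne_zero (hAv.symm.trans ((hΦ v).symm.trans (hker hmem)))

theorem ιMulti_mem_schubertSpan_of_le_finrank_inf {v : Fin (a + b) → V}
    (hv : LinearIndependent F v) (ha : a ≤ finrank F ↥(span F (range v) ⊓ x)) :
    ιMulti F (a + b) v ∈ schubertSpan x a b := by
  set U := span F (range v)
  have : FiniteDimensional F U := .span_of_finite F (finite_range v)
  have hU : finrank F U = a + b := by rw [finrank_span_eq_card hv, Fintype.card_fin]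
  obtain ⟨u, hu, hux⟩ : ∃ u : Fin a → U, LinearIndependent F u ∧ ∀ i, (u i : V) ∈ x := by
    let bx := finBasis F ↥(U ⊓ x)
    refine ⟨fun i => Submodule.inclusion inf_le_left (bx (Fin.castLE ha i)), ?_,
      fun i => (bx _).2.2⟩
    exact (bx.linearIndependent.comp _ (Fin.castLE_injective ha)).map' _ (ker_inclusion _ _ _)
  obtain ⟨t, ht⟩ := hu.exists_linearIndependent_fin_append hU.ge
  let e := basisOfLinearIndependentOfCardEqFinrank' _ ht (by rw [Fintype.card_fin, hU])
  let f := (ιMulti F (a + b)).compLinearMap U.subtype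
  have hv' : ιMulti F (a + b) v = f (fun i => ⟨v i, subset_span (mem_range_self i)⟩) := rfl
  rw [hv', f.map_eq_basis_det_smul e]
  refine smul_mem _ _ (subset_span ⟨U.subtype ∘ u, U.subtype ∘ t, hux, ?_⟩)
  simp only [f, e, AlternatingMap.compLinearMap_apply, coe_basisOfLinearIndependentOfCardEqFinrank']
  congr 1
  funext i
  exact Fin.addCases (fun j => by simp) (fun j => by simp) i

theorem ιMulti_mem_schubertSpan_iff {c : ℕ} (h : a + b = c) {v : Fin c → V}
    (hv : LinearIndependent F v) :
    ιMulti F c v ∈ schubertSpan x a b ↔ a ≤ finrank F ↥(span F (range v) ⊓ x) := by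
  subst h
  exact ⟨le_finrank_inf_of_ιMulti_mem_schubertSpan hv,
    ιMulti_mem_schubertSpan_of_le_finrank_inf hv⟩

end ExteriorAlgebra

open ExteriorAlgebra in
theorem schubert_variety_as_linear_section_general {F : Type*} [Field F]
    (n k δ : ℕ) (hδk : δ ≤ k)
    (x : Submodule F (Fin (n + 1) → F))
    (W : Submodule F (ExteriorAlgebra F (Fin (n + 1) → F)))
    (hW : W = Submodule.span F {w : ExteriorAlgebra F (Fin (n + 1) → F) |
      ∃ (u : Fin (δ + 1) → (Fin (n + 1) → F)) (t : Fin (k - δ) → (Fin (n + 1) → F)),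
        (∀ i, u i ∈ x) ∧
        w = ((List.ofFn fun i => ι F (u i)) ++ (List.ofFn fun i => ι F (t i))).prod}) :
    ∀ v : Fin (k + 1) → (Fin (n + 1) → F), LinearIndependent F v →
      ((List.ofFn fun i => ι F (v i)).prod ∈ W ↔
        δ + 1 ≤ Module.finrank F ↥(Submodule.span F (Set.range v) ⊓ x)) := by
  intro v hv
  simp only [List.prod_append, ← ιMulti_apply, ιMulti_mul_ιMulti] at hW ⊢
  rw [hW]
  exact ιMulti_mem_schubertSpan_iff (by omega) hv

open ExteriorAlgebra in
/-- Let `x ⊆ V = F^{n+1}` with `dim x ≥ δ+1`, `δ ≤ k ≤ n`, and let `W ⊆ ⋀^{k+1} V` be the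
span of all wedges `u₀ ∧ ⋯ ∧ u_δ ∧ w_{δ+1} ∧ ⋯ ∧ w_k` with `u_i ∈ x` and `w_j ∈ V`. Then
the wedge of `k+1` linearly independent vectors `v₀, …, v_k` lies in `W` iff
`dim(span{v₀,…,v_k} ∩ x) ≥ δ+1`; i.e. the nonzero totally decomposable vectors of `W` are
exactly the Plücker vectors of the Schubert variety `Ω(F(x,δ,k))`. -/
theorem schubert_variety_as_linear_section {F : Type*} [Field F]
    (n k δ : ℕ) (hδk : δ ≤ k) (hkn : k ≤ n)
    (x : Submodule F (Fin (n + 1) → F)) (hx : δ + 1 ≤ Module.finrank F x)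
    (W : Submodule F (ExteriorAlgebra F (Fin (n + 1) → F)))
    (hW : W = Submodule.span F {w : ExteriorAlgebra F (Fin (n + 1) → F) |
      ∃ (u : Fin (δ + 1) → (Fin (n + 1) → F)) (t : Fin (k - δ) → (Fin (n + 1) → F)),
        (∀ i, u i ∈ x) ∧
        w = ((List.ofFn fun i => ι F (u i)) ++ (List.ofFn fun i => ι F (t i))).prod}) :
    ∀ v : Fin (k + 1) → (Fin (n + 1) → F), LinearIndependent F v →
      ((List.ofFn fun i => ι F (v i)).prod ∈ W ↔
        δ + 1 ≤ Module.finrank F ↥(Submodule.span F (Set.range v) ⊓ x)) :=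
  schubert_variety_as_linear_section_general n k δ hδk x W hW
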